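/- Consider the SIR model with R₀ ≥ N/S(0) and a threshold M with I(0) < M < S(0) + I(0). Then I(t) ≤ M for all t ≥ 0 if and only if (N/R₀)·(ln(N/(R₀·S(0))) − 1) − R(0) + N ≤ M. -/

import Mathlib

/-!
Along a trajectory with `S > 0`, the quantity `S + I - (γ/β) log S` is conserved, where
`β = γR₀/N` is the contact rate. Since `s ↦ (γ/β) log s - s` is maximal at `s = γ/β`, this
bounds `I` everywhere by its value at the time when `S = γ/β`. When `S(0) ≥ γ/β` that time
exists: if `S` stayed above `γ/β`, then `I` would never decrease and `S` would fall at a rate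
at least `γ I(0)`, hence become negative.
-/

open Set

section Calculus

variable {f f' : ℝ → ℝ}

theorem monotoneOn_Ici_of_hasDerivAt_nonneg (hf : ∀ t ≥ (0 : ℝ), HasDerivAt f (f' t) t)
    (hf' : ∀ t ≥ (0 : ℝ), 0 ≤ f' t) : MonotoneOn f (Ici 0) := by
  refine monotoneOn_of_hasDerivWithinAt_nonneg (f' := f') (convex_Ici 0)
    (fun t ht => (hf t ht).continuousAt.continuousWithinAt) (fun t ht => ?_) (fun t ht => ?_)
  all_goals rw [interior_Ici] at ht
  exacts [(hf t ht.le).hasDerivWithinAt, hf' t ht.le]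

theorem pos_of_hasDerivAt_ge_neg_mul {k : ℝ} (hf : ∀ t ≥ (0 : ℝ), HasDerivAt f (f' t) t)
    (hf' : ∀ t ≥ (0 : ℝ), -k * f t ≤ f' t) (h₀ : 0 < f 0) : ∀ t ≥ (0 : ℝ), 0 < f t := by
  intro t ht
  have hmono : MonotoneOn (fun u => f u * Real.exp (u * k)) (Ici 0) := by
    refine monotoneOn_Ici_of_hasDerivAt_nonneg
      (fun u hu => (hf u hu).mul ((hasDerivAt_mul_const k).exp)) fun u hu => ?_
    have : 0 ≤ (f' u + k * f u) * Real.exp (u * k) :=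
      mul_nonneg (by linarith [hf' u hu]) (Real.exp_pos _).le
    linarith
  have h := hmono self_mem_Ici ht ht
  simp only [zero_mul, Real.exp_zero, mul_one] at h
  exact pos_of_mul_pos_left (h₀.trans_le h) (Real.exp_pos _).le

theorem exists_nonpos_of_hasDerivAt_le_neg {c : ℝ} (hc : 0 < c)
    (hf : ∀ t ≥ (0 : ℝ), HasDerivAt f (f' t) t) (hf' : ∀ t ≥ (0 : ℝ), f' t ≤ -c) :
    ∃ T ≥ (0 : ℝ), f T ≤ 0 := by
  have hanti : MonotoneOn (fun u => -f u - u * c) (Ici 0) :=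
    monotoneOn_Ici_of_hasDerivAt_nonneg (fun u hu => (hf u hu).neg.sub (hasDerivAt_mul_const c))
      fun u hu => by linarith [hf' u hu]
  have hT : 0 ≤ |f 0| / c := by positivity
  refine ⟨|f 0| / c, hT, ?_⟩
  have h := hanti self_mem_Ici hT hT
  simp only [zero_mul, div_mul_cancel₀ _ hc.ne'] at h
  linarith [le_abs_self (f 0)]

end Calculus

theorem mul_log_sub_le_mul_log_sub {b s : ℝ} (hb : 0 < b) (hs : 0 < s) :
    b * Real.log s - s ≤ b * Real.log b - b := by
  have h := Real.log_le_sub_one_of_pos (div_pos hs hb)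
  rw [Real.log_div hs.ne' hb.ne'] at h
  have := mul_le_mul_of_nonneg_left h hb.le
  rw [mul_sub, mul_sub, mul_div_cancel₀ _ hb.ne', mul_one] at this
  linarith

/-- The peak of `I` along an SIR trajectory from `(S₀, I₀)` with `S₀ ≥ b`, where `b = γ/β` is
the value of `S` at which `I` peaks. -/
noncomputable def sirPeak (b S₀ I₀ : ℝ) : ℝ := S₀ + I₀ + b * Real.log (b / S₀) - b

section SIR

variable {β γ : ℝ} {S I : ℝ → ℝ}

theorem sir_S_pos {K : ℝ} (hβ : 0 ≤ β) (hS : ∀ t ≥ (0 : ℝ), HasDerivAt S (-β * S t * I t) t)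
    (hS_nonneg : ∀ t ≥ (0 : ℝ), 0 ≤ S t) (hI_le : ∀ t ≥ (0 : ℝ), I t ≤ K) (hS₀ : 0 < S 0) :
    ∀ t ≥ (0 : ℝ), 0 < S t :=
  pos_of_hasDerivAt_ge_neg_mul (k := β * K) hS
    (fun t ht => by nlinarith [mul_nonneg (mul_nonneg hβ (hS_nonneg t ht)) (sub_nonneg.2 (hI_le t ht))])
    hS₀

theorem sir_conserved (hβ : β ≠ 0) (hS : ∀ t ≥ (0 : ℝ), HasDerivAt S (-β * S t * I t) t)
    (hI : ∀ t ≥ (0 : ℝ), HasDerivAt I (β * S t * I t - γ * I t) t)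
    (hS_pos : ∀ t ≥ (0 : ℝ), 0 < S t) (t : ℝ) (ht : 0 ≤ t) :
    S t + I t - γ / β * Real.log (S t) = S 0 + I 0 - γ / β * Real.log (S 0) := by
  have hV : ∀ u ≥ (0 : ℝ), HasDerivAt (fun u => S u + I u - γ / β * Real.log (S u)) 0 u := by
    intro u hu
    have hD := ((hS u hu).add (hI u hu)).sub (((hS u hu).log (hS_pos u hu).ne').const_mul (γ / β))
    refine hD.congr_deriv ?_
    field_simp [(hS_pos u hu).ne']
    ring
  exact constant_of_has_deriv_right_zero (fun u hu => (hV u hu.1).continuousAt.continuousWithinAt)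
    (fun u hu => (hV u hu.1).hasDerivWithinAt) t ⟨ht, le_rfl⟩

theorem sir_I_le_sirPeak (hβ : 0 < β) (hγ : 0 < γ)
    (hS : ∀ t ≥ (0 : ℝ), HasDerivAt S (-β * S t * I t) t)
    (hI : ∀ t ≥ (0 : ℝ), HasDerivAt I (β * S t * I t - γ * I t) t)
    (hS_pos : ∀ t ≥ (0 : ℝ), 0 < S t) (t : ℝ) (ht : 0 ≤ t) :
    I t ≤ sirPeak (γ / β) (S 0) (I 0) := by
  have hb : 0 < γ / β := div_pos hγ hβ
  have hmax := mul_log_sub_le_mul_log_sub hb (hS_pos t ht)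
  rw [sirPeak, Real.log_div hb.ne' (hS_pos 0 le_rfl).ne']
  linarith [sir_conserved hβ.ne' hS hI hS_pos t ht]

theorem sir_I_eq_sirPeak (hβ : β ≠ 0) (hS : ∀ t ≥ (0 : ℝ), HasDerivAt S (-β * S t * I t) t)
    (hI : ∀ t ≥ (0 : ℝ), HasDerivAt I (β * S t * I t - γ * I t) t)
    (hS_pos : ∀ t ≥ (0 : ℝ), 0 < S t) {t : ℝ} (ht : 0 ≤ t) (hSt : S t = γ / β) :
    I t = sirPeak (γ / β) (S 0) (I 0) := by
  have hb : γ / β ≠ 0 := hSt ▸ (hS_pos t ht).ne'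
  have h := sir_conserved hβ hS hI hS_pos t ht
  rw [hSt] at h
  rw [sirPeak, Real.log_div hb (hS_pos 0 le_rfl).ne']
  linarith

theorem sir_exists_S_le (hβ : 0 < β) (hγ : 0 < γ)
    (hS : ∀ t ≥ (0 : ℝ), HasDerivAt S (-β * S t * I t) t)
    (hI : ∀ t ≥ (0 : ℝ), HasDerivAt I (β * S t * I t - γ * I t) t)
    (hI_nonneg : ∀ t ≥ (0 : ℝ), 0 ≤ I t) (hI₀ : 0 < I 0) :
    ∃ T ≥ (0 : ℝ), S T ≤ γ / β := by
  by_contra! hS_gt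
  have hβS : ∀ t ≥ (0 : ℝ), γ < β * S t := fun t ht => (div_lt_iff₀' hβ).1 (hS_gt t ht)
  have hI_mono : MonotoneOn I (Ici 0) :=
    monotoneOn_Ici_of_hasDerivAt_nonneg hI fun t ht => by
      nlinarith [mul_nonneg (sub_nonneg.2 (hβS t ht).le) (hI_nonneg t ht)]
  obtain ⟨T, hT, hST⟩ := exists_nonpos_of_hasDerivAt_le_neg (mul_pos hγ hI₀) hS fun t ht => by
    have hI₀t : I 0 ≤ I t := hI_mono self_mem_Ici ht ht
    nlinarith [mul_le_mul (hβS t ht).le hI₀t hI₀.le (mul_pos hβ ((div_pos hγ hβ).trans (hS_gt t ht))).le]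
  linarith [hS_gt T hT, div_pos hγ hβ]

theorem sir_exists_S_eq (hβ : 0 < β) (hγ : 0 < γ)
    (hS : ∀ t ≥ (0 : ℝ), HasDerivAt S (-β * S t * I t) t)
    (hI : ∀ t ≥ (0 : ℝ), HasDerivAt I (β * S t * I t - γ * I t) t)
    (hI_nonneg : ∀ t ≥ (0 : ℝ), 0 ≤ I t) (hI₀ : 0 < I 0) (hS₀ : γ / β ≤ S 0) :
    ∃ t ≥ (0 : ℝ), S t = γ / β := by
  obtain ⟨T, hT, hST⟩ := sir_exists_S_le hβ hγ hS hI hI_nonneg hI₀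
  obtain ⟨t, ht, hSt⟩ := intermediate_value_Icc' hT
    (fun u hu => (hS u hu.1).continuousAt.continuousWithinAt) ⟨hST, hS₀⟩
  exact ⟨t, ht.1, hSt⟩

end SIR

theorem sir_threshold_iff_Imax_le_general
    (N γ R₀ M : ℝ) (S I R : ℝ → ℝ)
    (hN : 0 < N) (hγ : 0 < γ) (hR₀ : 0 < R₀)
    (hS' : ∀ t ≥ (0:ℝ), HasDerivAt S (-(γ * R₀ / N) * S t * I t) t)
    (hI' : ∀ t ≥ (0:ℝ), HasDerivAt I ((γ * R₀ / N) * S t * I t - γ * I t) t)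
    (hSnn : ∀ t ≥ (0:ℝ), 0 ≤ S t) (hInn : ∀ t ≥ (0:ℝ), 0 ≤ I t)
    (hRnn : ∀ t ≥ (0:ℝ), 0 ≤ R t)
    (hsum : ∀ t ≥ (0:ℝ), S t + I t + R t = N)
    (hS0 : 0 < S 0) (hI0 : 0 < I 0)
    (hR₀ge : R₀ ≥ N / S 0) :
    (∀ t ≥ (0:ℝ), I t ≤ M) ↔
      (N / R₀) * (Real.log (N / (R₀ * S 0)) - 1) - R 0 + N ≤ M := by
  have hβ : 0 < γ * R₀ / N := by positivity
  have hb : γ / (γ * R₀ / N) = N / R₀ := by field_simp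
  have hS_pos := sir_S_pos (K := N) hβ.le hS' hSnn
    (fun t ht => by linarith [hSnn t ht, hRnn t ht, hsum t ht]) hS0
  have hpeak : (N / R₀) * (Real.log (N / (R₀ * S 0)) - 1) - R 0 + N
      = sirPeak (γ / (γ * R₀ / N)) (S 0) (I 0) := by
    rw [hb, sirPeak, ← div_div]
    linarith [hsum 0 le_rfl]
  rw [hpeak]
  constructor
  · intro hIM
    have hS₀ : γ / (γ * R₀ / N) ≤ S 0 := by
      rw [hb, div_le_iff₀ hR₀]
      rwa [ge_iff_le, div_le_iff₀ hS0, mul_comm] at hR₀ge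
    obtain ⟨t, ht, hSt⟩ := sir_exists_S_eq hβ hγ hS' hI' hInn hI0 hS₀
    exact sir_I_eq_sirPeak hβ.ne' hS' hI' hS_pos ht hSt ▸ hIM t ht
  · exact fun hle t ht => (sir_I_le_sirPeak hβ hγ hS' hI' hS_pos t ht).trans hle

/-- In the SIR model with R₀ ≥ N/S(0) and I(0) < M < S(0) + I(0),
I(t) ≤ M for all t ≥ 0 if and only if
(N/R₀)·(ln(N/(R₀·S(0))) − 1) − R(0) + N ≤ M. -/
theorem sir_threshold_iff_Imax_le
    (N γ R₀ M : ℝ) (S I R : ℝ → ℝ)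
    (hN : 0 < N) (hγ : 0 < γ) (hR₀ : 0 < R₀)
    (hS' : ∀ t ≥ (0:ℝ), HasDerivAt S (-(γ * R₀ / N) * S t * I t) t)
    (hI' : ∀ t ≥ (0:ℝ), HasDerivAt I ((γ * R₀ / N) * S t * I t - γ * I t) t)
    (hR' : ∀ t ≥ (0:ℝ), HasDerivAt R (γ * I t) t)
    (hSnn : ∀ t ≥ (0:ℝ), 0 ≤ S t) (hInn : ∀ t ≥ (0:ℝ), 0 ≤ I t)
    (hRnn : ∀ t ≥ (0:ℝ), 0 ≤ R t)
    (hsum : ∀ t ≥ (0:ℝ), S t + I t + R t = N)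
    (hS0 : 0 < S 0) (hI0 : 0 < I 0)
    (hR₀ge : R₀ ≥ N / S 0)
    (hM₁ : I 0 < M) (hM₂ : M < S 0 + I 0) :
    (∀ t ≥ (0:ℝ), I t ≤ M) ↔
      (N / R₀) * (Real.log (N / (R₀ * S 0)) - 1) - R 0 + N ≤ M :=
  sir_threshold_iff_Imax_le_general N γ R₀ M S I R hN hγ hR₀ hS' hI' hSnn hInn hRnn hsum hS0 hI0
    hR₀ge
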